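/- arXiv:1109.1023 — 4 statements merged into one kernel-verified Lean document; each statement's English description precedes it below -/
import Mathlib

section
/- Let H be a finitely generated free abelian group, and let ξ₁, ξ₂ ≤ H be primitive sublattices with ξ₁ ∩ ξ₂ = 0 and rank ξ₁ + rank ξ₂ = rank H. Set ξ = (H/ξ₁)^∨ + (H/ξ₂)^∨ ≤ H^∨. Then the determinant group ξ̄/ξ (primitive closure taken in H^∨) is isomorphic to the determinant group (ξ₁+ξ₂)‾/(ξ₁+ξ₂) (primitive closure taken in H). -/
/-!
Both determinant groups are finite, so the primitive closures are everything and the claim is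
`H^∨ / ((H/ξ₁)^∨ + (H/ξ₂)^∨) ≅ H / (ξ₁ + ξ₂)`. Let `f : ξ₁ → H/ξ₂` be the restriction of the
projection; it is injective between lattices of the same rank. The right side is `coker f`.
Since `ξ₁` is a direct summand, restriction `H^∨ → ξ₁^∨` is onto with kernel `(H/ξ₁)^∨`, and it
maps `(H/ξ₂)^∨` onto the image of `f^∨`, so the left side is `coker f^∨`. In Smith normal form
`f` is diagonal, `f^∨` is diagonal with the same entries in the dual bases, and both cokernels
are `∏ ℤ/aᵢ`.
-/

/-- The primitive closure of a subgroup `ξ` of an additive abelian group: all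
elements having a positive multiple in `ξ`. -/
def addPrimitiveClosure {H : Type*} [AddCommGroup H] (ξ : AddSubgroup H) :
    AddSubgroup H where
  carrier := {x : H | ∃ n : ℕ, 0 < n ∧ n • x ∈ ξ}
  zero_mem' := ⟨1, one_pos, by simpa using ξ.zero_mem⟩
  add_mem' := by
    rintro a b ⟨n, hn, ha⟩ ⟨m, hm, hb⟩
    refine ⟨n * m, Nat.mul_pos hn hm, ?_⟩
    rw [smul_add]
    exact add_mem (by rw [mul_comm n m, mul_smul]; exact AddSubgroup.nsmul_mem _ ha m)
      (by rw [mul_smul]; exact AddSubgroup.nsmul_mem _ hb n)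
  neg_mem' := by
    rintro a ⟨n, hn, ha⟩
    exact ⟨n, hn, by rw [smul_neg]; exact neg_mem ha⟩

/-- The dual `(H/ξ)^∨`, viewed inside `H^∨ = Hom(H, ℤ)` via precomposition with
the projection `H → H/ξ`. -/
def dualOfQuotient {H : Type*} [AddCommGroup H] (ξ : AddSubgroup H) :
    AddSubgroup (H →+ ℤ) where
  carrier := Set.range (fun φ : (H ⧸ ξ) →+ ℤ => φ.comp (QuotientAddGroup.mk' ξ))
  zero_mem' := ⟨0, by ext x; simp⟩
  add_mem' := by
    rintro _ _ ⟨φ, rfl⟩ ⟨ψ, rfl⟩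
    exact ⟨φ + ψ, by ext x; simp⟩
  neg_mem' := by
    rintro _ ⟨φ, rfl⟩
    exact ⟨-φ, by ext x; simp⟩

open Module

noncomputable def LinearMap.quotientComapEquivOfSurjective {R M N : Type*} [Ring R] [AddCommGroup M]
    [Module R M] [AddCommGroup N] [Module R N] (f : M →ₗ[R] N) (hf : Function.Surjective f)
    (T : Submodule R N) : (M ⧸ T.comap f) ≃ₗ[R] N ⧸ T :=
  (Submodule.quotEquivOfEq _ _ (by rw [ker_comp, Submodule.ker_mkQ])).trans
    ((T.mkQ ∘ₗ f).quotKerEquivOfSurjective (T.mkQ_surjective.comp hf))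

namespace Module.Basis

variable {ι R P Q : Type*} [CommRing R] [AddCommGroup P] [Module R P]
  [AddCommGroup Q] [Module R Q] (p : Basis ι R P) (q : Basis ι R Q) {a : ι → R}
  {f : P →ₗ[R] Q}

theorem dualMap_coord (hf : ∀ i, f (p i) = a i • q i) (i : ι) :
    f.dualMap (q.coord i) = a i • p.coord i :=
  p.ext fun j => by
    rcases eq_or_ne j i with rfl | hji
    · simp [hf]
    · simp [hf, hji.symm]

theorem repr_apply_of_apply_eq_smul (hf : ∀ i, f (p i) = a i • q i) (x : P) (i : ι) :
    q.repr (f x) i = a i * p.repr x i :=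
  LinearMap.congr_fun (p.dualMap_coord q hf i) x

variable [Fintype ι]

theorem mem_range_iff_forall_dvd_repr (hf : ∀ i, f (p i) = a i • q i) (y : Q) :
    y ∈ LinearMap.range f ↔ ∀ i, a i ∣ q.repr y i := by
  constructor
  · rintro ⟨x, rfl⟩ i
    exact ⟨_, p.repr_apply_of_apply_eq_smul q hf x i⟩
  · intro hy
    choose c hc using hy
    refine ⟨∑ i, c i • p i, q.ext_elem fun i => ?_⟩
    rw [p.repr_apply_of_apply_eq_smul q hf, p.repr_sum_self, hc]

noncomputable def quotientRangeEquivPi (hf : ∀ i, f (p i) = a i • q i) :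
    (Q ⧸ LinearMap.range f) ≃ₗ[R] Π i, R ⧸ Ideal.span {a i} :=
  let Φ : Q →ₗ[R] Π i, R ⧸ Ideal.span {a i} :=
    LinearMap.pi fun i => (Ideal.span {a i}).mkQ ∘ₗ q.coord i
  have hΦ : Function.Surjective Φ := fun t => by
    choose s hs using fun i => Submodule.Quotient.mk_surjective _ (t i)
    refine ⟨q.equivFun.symm s, funext fun i => ?_⟩
    rw [← hs i, Basis.equivFun_symm_apply]
    simp only [Φ, LinearMap.pi_apply, LinearMap.comp_apply, Basis.coord_apply, q.repr_sum_self,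
      Submodule.mkQ_apply]
  have hker : LinearMap.ker Φ = LinearMap.range f := by
    ext y
    simp [Φ, funext_iff, Ideal.Quotient.eq_zero_iff_dvd, p.mem_range_iff_forall_dvd_repr q hf]
  (Submodule.quotEquivOfEq _ _ hker.symm).trans (Φ.quotKerEquivOfSurjective hΦ)

end Module.Basis

section PID

variable {R P Q : Type*} [CommRing R] [IsDomain R] [IsPrincipalIdealRing R]
  [AddCommGroup P] [Module R P] [AddCommGroup Q] [Module R Q] [Free R Q] [Module.Finite R Q]

theorem LinearMap.exists_basis_apply_eq_smul_of_injective (f : P →ₗ[R] Q)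
    (hf : Function.Injective f) (h : finrank R P = finrank R Q) :
    ∃ (p : Basis (Free.ChooseBasisIndex R Q) R P) (q : Basis (Free.ChooseBasisIndex R Q) R Q)
      (a : Free.ChooseBasisIndex R Q → R), ∀ i, f (p i) = a i • q i := by
  obtain ⟨q, a, b, hb⟩ := (range f).exists_smith_normal_form_of_rank_eq (Free.chooseBasis R Q)
    ((finrank_range_of_inj hf).trans h)
  refine ⟨b.map (LinearEquiv.ofInjective f hf).symm, q, a, fun i => ?_⟩
  rw [Basis.map_apply, ← hb i, ← LinearEquiv.ofInjective_apply (h := hf),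
    LinearEquiv.apply_symm_apply]

theorem LinearMap.nonempty_quotient_range_dualMap_equiv (f : P →ₗ[R] Q)
    (hf : Function.Injective f) (h : finrank R P = finrank R Q) :
    Nonempty ((Dual R P ⧸ range f.dualMap) ≃ₗ[R] Q ⧸ range f) := by
  classical
  obtain ⟨p, q, a, hpq⟩ := f.exists_basis_apply_eq_smul_of_injective hf h
  have hdual : ∀ i, f.dualMap (q.dualBasis i) = a i • p.dualBasis i := by
    simpa only [Basis.coe_dualBasis] using p.dualMap_coord q hpq
  exact ⟨q.dualBasis.quotientRangeEquivPi p.dualBasis hdual ≪≫ₗ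
    (p.quotientRangeEquivPi q hpq).symm⟩

end PID

namespace Submodule

section Ring

variable {R M : Type*} [Ring R] [AddCommGroup M] [Module R M] (p q : Submodule R M)

theorem exists_leftInverse_subtype [Projective R (M ⧸ p)] :
    ∃ ρ : M →ₗ[R] p, ρ ∘ₗ p.subtype = LinearMap.id := by
  obtain ⟨s, hs⟩ := p.mkQ.exists_rightInverse_of_surjective p.range_mkQ
  have hmem : ∀ x, x - s (p.mkQ x) ∈ p := fun x =>
    (Quotient.mk_eq_zero p).mp <| by
      rw [Quotient.mk_sub]
      exact sub_eq_zero.mpr (LinearMap.congr_fun hs (p.mkQ x)).symm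
  refine ⟨LinearMap.codRestrict p (LinearMap.id - s ∘ₗ p.mkQ) hmem, LinearMap.ext fun x => ?_⟩
  ext
  simp [(Quotient.mk_eq_zero p).mpr x.2]

theorem injective_mkQ_comp_subtype (hpq : Disjoint p q) :
    Function.Injective (q.mkQ ∘ₗ p.subtype) := by
  rw [← LinearMap.ker_eq_bot, LinearMap.ker_comp, ker_mkQ, ← disjoint_iff_comap_eq_bot]
  exact hpq

theorem comap_mkQ_range_mkQ_comp_subtype :
    (LinearMap.range (q.mkQ ∘ₗ p.subtype)).comap q.mkQ = p ⊔ q := by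
  rw [LinearMap.range_comp, range_subtype, comap_map_eq, ker_mkQ]

end Ring

section CommRing

variable {R M : Type*} [CommRing R] [AddCommGroup M] [Module R M] (p q : Submodule R M)

theorem dualMap_subtype_surjective [Projective R (M ⧸ p)] :
    Function.Surjective p.subtype.dualMap := by
  obtain ⟨ρ, hρ⟩ := p.exists_leftInverse_subtype
  intro φ
  refine ⟨ρ.dualMap φ, ?_⟩
  rw [← LinearMap.comp_apply, LinearMap.dualMap_comp_dualMap, hρ, LinearMap.dualMap_id,
    LinearMap.id_apply]

theorem comap_dualMap_subtype_range_dualMap :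
    (LinearMap.range (q.mkQ ∘ₗ p.subtype).dualMap).comap p.subtype.dualMap =
      p.dualAnnihilator ⊔ q.dualAnnihilator := by
  rw [← LinearMap.dualMap_comp_dualMap, LinearMap.range_comp, range_dualMap_mkQ_eq, comap_map_eq,
    LinearMap.ker_dualMap_eq_dualAnnihilator_range, range_subtype, sup_comm]

end CommRing

section Domain

variable {R M : Type*} [CommRing R] [IsDomain R] [AddCommGroup M] [Module R M]
  [Module.Finite R M] {p q : Submodule R M}

theorem finrank_eq_finrank_quotient (hrank : finrank R p + finrank R q = finrank R M) :
    finrank R p = finrank R (M ⧸ q) := by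
  have := q.finrank_quotient_add_finrank
  omega

variable [IsPrincipalIdealRing R]

theorem nonempty_dual_quotient_sup_dualAnnihilator_equiv [Projective R (M ⧸ p)]
    [Free R (M ⧸ q)] (hpq : Disjoint p q) (hrank : finrank R p + finrank R q = finrank R M) :
    Nonempty ((Dual R M ⧸ (p.dualAnnihilator ⊔ q.dualAnnihilator)) ≃ₗ[R] M ⧸ (p ⊔ q)) := by
  obtain ⟨e⟩ := (q.mkQ ∘ₗ p.subtype).nonempty_quotient_range_dualMap_equiv
    (injective_mkQ_comp_subtype p q hpq) (finrank_eq_finrank_quotient hrank)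
  exact ⟨quotEquivOfEq _ _ (comap_dualMap_subtype_range_dualMap p q).symm ≪≫ₗ
    p.subtype.dualMap.quotientComapEquivOfSurjective p.dualMap_subtype_surjective _ ≪≫ₗ e ≪≫ₗ
    (q.mkQ.quotientComapEquivOfSurjective q.mkQ_surjective _).symm ≪≫ₗ
    quotEquivOfEq _ _ (comap_mkQ_range_mkQ_comp_subtype p q)⟩

end Domain

theorem finite_quotient_sup {M : Type*} [AddCommGroup M] [Module.Finite ℤ M]
    {p q : Submodule ℤ M} [Free ℤ (M ⧸ q)] (hpq : Disjoint p q)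
    (hrank : finrank ℤ p + finrank ℤ q = finrank ℤ M) :
    Finite (M ⧸ (p ⊔ q)) := by
  have := finiteQuotientOfFreeOfRankEq (LinearMap.range (q.mkQ ∘ₗ p.subtype))
    ((LinearMap.finrank_range_of_inj (injective_mkQ_comp_subtype p q hpq)).trans
      (finrank_eq_finrank_quotient hrank))
  exact .of_equiv _ ((q.mkQ.quotientComapEquivOfSurjective q.mkQ_surjective _).symm ≪≫ₗ
    quotEquivOfEq _ _ (comap_mkQ_range_mkQ_comp_subtype p q)).toEquiv

end Submodule

section AddCommGroup

variable {G : Type*} [AddCommGroup G] {S : AddSubgroup G}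

theorem mem_addPrimitiveClosure_iff_isOfFinAddOrder {x : G} :
    x ∈ addPrimitiveClosure S ↔ IsOfFinAddOrder (x : G ⧸ S) := by
  simp only [isOfFinAddOrder_iff_nsmul_eq_zero, ← QuotientAddGroup.mk_nsmul,
    QuotientAddGroup.eq_zero_iff]
  rfl

theorem isAddTorsionFree_quotient_of_addPrimitiveClosure_eq (h : addPrimitiveClosure S = S) :
    IsAddTorsionFree (G ⧸ S) := by
  refine .of_not_isOfFinAddOrder fun y hy hfin => hy ?_
  obtain ⟨x, rfl⟩ := QuotientAddGroup.mk_surjective y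
  exact (QuotientAddGroup.eq_zero_iff x).mpr
    (h ▸ mem_addPrimitiveClosure_iff_isOfFinAddOrder.mpr hfin)

-- `G ⧸ S` and `G ⧸ AddSubgroup.toIntSubmodule S` are definitionally the same group.
theorem free_quotient_toIntSubmodule [Module.Finite ℤ G] (h : addPrimitiveClosure S = S) :
    Free ℤ (G ⧸ AddSubgroup.toIntSubmodule S) :=
  have : IsAddTorsionFree (G ⧸ AddSubgroup.toIntSubmodule S) :=
    isAddTorsionFree_quotient_of_addPrimitiveClosure_eq h
  free_of_finite_type_torsion_free'

theorem addPrimitiveClosure_eq_top_of_finite [Finite (G ⧸ S)] : addPrimitiveClosure S = ⊤ :=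
  eq_top_iff.mpr fun _ _ =>
    mem_addPrimitiveClosure_iff_isOfFinAddOrder.mpr (isOfFinAddOrder_of_finite _)

def quotientAddSubgroupOfEquivOfEqTop {T : AddSubgroup G} (hT : T = ⊤) :
    (↥T ⧸ S.addSubgroupOf T) ≃+ G ⧸ S := by
  subst hT
  exact QuotientAddGroup.congr _ _ AddSubgroup.topEquiv (by
    ext x
    simp [AddSubgroup.mem_addSubgroupOf])

theorem mem_dualOfQuotient {φ : G →+ ℤ} : φ ∈ dualOfQuotient S ↔ ∀ x ∈ S, φ x = 0 := by
  constructor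
  · rintro ⟨ψ, rfl⟩ x hx
    simp [(QuotientAddGroup.eq_zero_iff x).mpr hx]
  · exact fun h => ⟨QuotientAddGroup.lift S φ h, AddMonoidHom.ext fun x => rfl⟩

theorem map_toIntSubmodule_dualOfQuotient (S : AddSubgroup G) :
    (AddSubgroup.toIntSubmodule (dualOfQuotient S)).map (addMonoidHomLequivInt ℤ).toLinearMap =
      (AddSubgroup.toIntSubmodule S).dualAnnihilator := by
  ext φ
  rw [Submodule.mem_map_equiv, Submodule.mem_dualAnnihilator]
  exact mem_dualOfQuotient

noncomputable def quotientSupEquivToIntSubmodule (S T : AddSubgroup G) :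
    (G ⧸ (S ⊔ T)) ≃+ G ⧸ (AddSubgroup.toIntSubmodule S ⊔ AddSubgroup.toIntSubmodule T) :=
  (Submodule.quotEquivOfEq _ _ (map_sup AddSubgroup.toIntSubmodule S T)).toAddEquiv

noncomputable def dualOfQuotientSupEquivDualAnnihilator (S T : AddSubgroup G) :
    ((G →+ ℤ) ⧸ (dualOfQuotient S ⊔ dualOfQuotient T)) ≃+
      Dual ℤ G ⧸ ((AddSubgroup.toIntSubmodule S).dualAnnihilator ⊔
        (AddSubgroup.toIntSubmodule T).dualAnnihilator) :=
  (quotientSupEquivToIntSubmodule _ _).trans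
    (Submodule.Quotient.equiv _ _ (addMonoidHomLequivInt ℤ) (by
      rw [Submodule.map_sup, map_toIntSubmodule_dualOfQuotient,
        map_toIntSubmodule_dualOfQuotient])).toAddEquiv

end AddCommGroup

/-- For primitive sublattices `ξ₁, ξ₂` of a f.g. free abelian group `H` with
`ξ₁ ∩ ξ₂ = 0` and complementary ranks, the determinant group of
`ξ = (H/ξ₁)^∨ + (H/ξ₂)^∨ ≤ H^∨` is isomorphic to the determinant group of
`ξ₁ + ξ₂ ≤ H`. -/
theorem determinant_group_iso {H : Type*} [AddCommGroup H]
    [Module.Free ℤ H] [Module.Finite ℤ H]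
    (ξ₁ ξ₂ : AddSubgroup H)
    (h1 : addPrimitiveClosure ξ₁ = ξ₁) (h2 : addPrimitiveClosure ξ₂ = ξ₂)
    (hdisj : ξ₁ ⊓ ξ₂ = ⊥)
    (hrank : Module.finrank ℤ ↥(AddSubgroup.toIntSubmodule ξ₁) +
        Module.finrank ℤ ↥(AddSubgroup.toIntSubmodule ξ₂) = Module.finrank ℤ H) :
    Nonempty
      ((↥(addPrimitiveClosure (dualOfQuotient ξ₁ ⊔ dualOfQuotient ξ₂)) ⧸
          (dualOfQuotient ξ₁ ⊔ dualOfQuotient ξ₂).addSubgroupOf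
            (addPrimitiveClosure (dualOfQuotient ξ₁ ⊔ dualOfQuotient ξ₂))) ≃+
        (↥(addPrimitiveClosure (ξ₁ ⊔ ξ₂)) ⧸
          (ξ₁ ⊔ ξ₂).addSubgroupOf (addPrimitiveClosure (ξ₁ ⊔ ξ₂)))) := by
  have := free_quotient_toIntSubmodule h1
  have := free_quotient_toIntSubmodule h2
  have hdisj' : Disjoint (AddSubgroup.toIntSubmodule ξ₁) (AddSubgroup.toIntSubmodule ξ₂) := by
    rw [disjoint_iff, ← map_inf, hdisj, map_bot]
  obtain ⟨e⟩ := Submodule.nonempty_dual_quotient_sup_dualAnnihilator_equiv hdisj' hrank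
  let eH := quotientSupEquivToIntSubmodule ξ₁ ξ₂
  let E := (dualOfQuotientSupEquivDualAnnihilator ξ₁ ξ₂).trans (e.toAddEquiv.trans eH.symm)
  have : Finite (H ⧸ (ξ₁ ⊔ ξ₂)) :=
    have := Submodule.finite_quotient_sup hdisj' hrank
    .of_equiv _ eH.symm.toEquiv
  have : Finite ((H →+ ℤ) ⧸ (dualOfQuotient ξ₁ ⊔ dualOfQuotient ξ₂)) := .of_equiv _ E.symm.toEquiv
  exact ⟨(quotientAddSubgroupOfEquivOfEqTop addPrimitiveClosure_eq_top_of_finite).trans <|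
    E.trans (quotientAddSubgroupOfEquivOfEqTop addPrimitiveClosure_eq_top_of_finite).symm⟩
end

section
/- Let ξ be a subgroup of a finitely generated abelian group H with primitive closure ξ̄, and suppose η ∈ Hom(H, ℂ*) has finite order and the coset ηV(ξ) is considered. If ρ ∈ Hom(H, ℂ*) satisfies ρV(ξ) = ηV(ξ), and the image of ρ in Hom(H,ℂ*)/V(ξ) has order n, then ρ can be chosen so that ρ has finite order m with n ∣ m and m ∣ n·c, where c is the exponent of the finite group ξ̄/ξ. -/
/-- The primitive closure of a subgroup `ξ` of an abelian group. -/
def primitiveClosure {H : Type*} [CommGroup H] (ξ : Subgroup H) : Subgroup H where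
  carrier := {x : H | ∃ n : ℕ, 0 < n ∧ x ^ n ∈ ξ}
  one_mem' := ⟨1, one_pos, by simpa using ξ.one_mem⟩
  mul_mem' := by
    rintro a b ⟨n, hn, ha⟩ ⟨m, hm, hb⟩
    refine ⟨n * m, Nat.mul_pos hn hm, ?_⟩
    rw [mul_pow]
    exact mul_mem (by rw [pow_mul]; exact pow_mem ha m)
      (by rw [mul_comm n m, pow_mul]; exact pow_mem hb n)
  inv_mem' := by
    rintro a ⟨n, hn, ha⟩
    exact ⟨n, hn, by rw [inv_pow]; exact inv_mem ha⟩

/-- `V(ξ)`: the subgroup of characters of `H` vanishing on `ξ`. -/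
def charsVanishing {H : Type*} [CommGroup H] (ξ : Subgroup H) :
    Subgroup (H →* ℂˣ) where
  carrier := {ρ : H →* ℂˣ | ∀ x ∈ ξ, ρ x = 1}
  one_mem' := fun x _ => rfl
  mul_mem' := by
    intro ρ σ hρ hσ x hx
    simp [hρ x hx, hσ x hx]
  inv_mem' := by
    intro ρ hρ x hx
    simp [hρ x hx]

/-!
Since `ℂˣ` is divisible, it is an injective `ℤ`-module, so every character of a torsion-free
abelian group has a `k`-th root for each `k ≠ 0`. Let `n` be the order of `ηV(ξ)` and `c` the
exponent of `ξ̄/ξ`. Then `η ^ n` vanishes on `ξ`, so `η ^ (n * c)` vanishes on `ξ̄` and factors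
through the torsion-free group `H/ξ̄`; an `(n * c)`-th root `σ` of it there lies in
`V(ξ̄) ≤ V(ξ)`, and `ρ = η σ⁻¹` represents `ηV(ξ)` with `ρ ^ (n * c) = 1`.
-/

noncomputable instance IsAlgClosed.rootableByUnits {k : Type*} [Field k] [IsAlgClosed k] :
    RootableBy kˣ ℕ :=
  rootableByOfPowLeftSurj _ _ fun {n} hn x => by
    obtain ⟨z, hz⟩ := IsAlgClosed.exists_pow_nat_eq (x : k) (Nat.pos_of_ne_zero hn)
    have hz0 : z ≠ 0 := by rintro rfl; exact x.ne_zero (by simpa [hn] using hz.symm)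
    exact ⟨Units.mk0 z hz0, Units.ext (by simpa using hz)⟩

theorem MonoidHom.exists_pow_eq_of_isMulTorsionFree {A G : Type*} [CommGroup A]
    [IsMulTorsionFree A] [CommGroup G] [RootableBy G ℕ] {k : ℕ} (hk : k ≠ 0) (f : A →* G) :
    ∃ g : A →* G, g ^ k = f := by
  let : RootableBy G ℤ := Group.rootableByIntOfRootableByNat G
  let : DivisibleBy (Additive G) ℤ :=
    divisibleByOfSMulRightSurj _ _ fun hn x => RootableBy.surjective_pow G ℤ hn x.toMul
  -- Baer: extend `f` along the injective map `a ↦ a ^ k`.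
  obtain ⟨g, hg⟩ := (Module.Baer.of_divisible (Additive G)).extension_property_addMonoidHom
    (powMonoidHom k : A →* A).toAdditive (IsMulTorsionFree.pow_left_injective (M := A) hk)
    f.toAdditive
  refine ⟨MonoidHom.toAdditive.symm g, MonoidHom.ext fun a => ?_⟩
  simpa [← map_pow] using congr(Additive.toMul ($hg (Additive.ofMul a)))

theorem QuotientGroup.exists_mk_eq_and_pow_eq_one {M : Type*} [CommGroup M] {W : Subgroup M}
    {η σ : M} {k : ℕ} (hσ : σ ∈ W) (hσk : σ ^ k = η ^ k) :
    ∃ ρ : M, (ρ : M ⧸ W) = η ∧ ρ ^ k = 1 := by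
  refine ⟨η * σ⁻¹, ?_, by rw [mul_pow, inv_pow, hσk, mul_inv_cancel]⟩
  rwa [QuotientGroup.eq, mul_inv_rev, inv_inv, inv_mul_cancel_right]

section Characters

variable {H : Type*} [CommGroup H] {ξ : Subgroup H}

theorem charsVanishing_normal (ξ : Subgroup H) : (charsVanishing ξ).Normal :=
  ⟨fun _ hρ _ => by rwa [mul_inv_cancel_comm]⟩

theorem mem_charsVanishing_iff_le_ker {ρ : H →* ℂˣ} : ρ ∈ charsVanishing ξ ↔ ξ ≤ ρ.ker :=
  Iff.rfl

theorem le_primitiveClosure (ξ : Subgroup H) : ξ ≤ primitiveClosure ξ :=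
  fun x hx => ⟨1, one_pos, by simpa using hx⟩

theorem charsVanishing_primitiveClosure_le :
    charsVanishing (primitiveClosure ξ) ≤ charsVanishing ξ :=
  fun _ hρ x hx => hρ x (le_primitiveClosure ξ hx)

theorem pow_exponent_mem_of_mem_primitiveClosure {x : H} (hx : x ∈ primitiveClosure ξ) :
    x ^ Monoid.exponent (primitiveClosure ξ ⧸ ξ.subgroupOf (primitiveClosure ξ)) ∈ ξ := by
  have := Monoid.pow_exponent_eq_one
    (QuotientGroup.mk ⟨x, hx⟩ : primitiveClosure ξ ⧸ ξ.subgroupOf (primitiveClosure ξ))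
  rwa [← QuotientGroup.mk_pow, QuotientGroup.eq_one_iff, Subgroup.mem_subgroupOf] at this

instance (ξ : Subgroup H) : IsMulTorsionFree (H ⧸ primitiveClosure ξ) := by
  refine .of_not_isOfFinOrder fun a ha hfin => ha ?_
  induction a using QuotientGroup.induction_on with | H x => ?_
  obtain ⟨n, hn, hxn⟩ := isOfFinOrder_iff_pow_eq_one.1 hfin
  rw [← QuotientGroup.mk_pow, QuotientGroup.eq_one_iff] at hxn
  obtain ⟨m, hm, hxnm⟩ := hxn
  rw [QuotientGroup.eq_one_iff]
  exact ⟨n * m, Nat.mul_pos hn hm, by rwa [pow_mul]⟩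

theorem pow_exponent_mem_charsVanishing_primitiveClosure {χ : H →* ℂˣ}
    (hχ : χ ∈ charsVanishing ξ) :
    χ ^ Monoid.exponent (primitiveClosure ξ ⧸ ξ.subgroupOf (primitiveClosure ξ)) ∈
      charsVanishing (primitiveClosure ξ) := fun x hx => by
  rw [MonoidHom.pow_apply, ← map_pow, hχ _ (pow_exponent_mem_of_mem_primitiveClosure hx)]

theorem exists_pow_eq_of_mem_charsVanishing_primitiveClosure {k : ℕ} (hk : k ≠ 0)
    {χ : H →* ℂˣ} (hχ : χ ∈ charsVanishing (primitiveClosure ξ)) :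
    ∃ σ ∈ charsVanishing (primitiveClosure ξ), σ ^ k = χ := by
  obtain ⟨τ, hτ⟩ := MonoidHom.exists_pow_eq_of_isMulTorsionFree hk
    (QuotientGroup.lift _ χ (mem_charsVanishing_iff_le_ker.1 hχ))
  refine ⟨τ.comp (QuotientGroup.mk' _), fun x hx => ?_, MonoidHom.ext fun x => ?_⟩
  · rw [MonoidHom.comp_apply, QuotientGroup.mk'_apply, (QuotientGroup.eq_one_iff x).2 hx,
      map_one]
  · rw [MonoidHom.pow_apply, MonoidHom.comp_apply, ← MonoidHom.pow_apply, hτ,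
      QuotientGroup.mk'_apply, QuotientGroup.lift_mk]

end Characters

theorem finite_order_coset_representative_general {H : Type*} [CommGroup H]
    (ξ : Subgroup H) (η : H →* ℂˣ) (hη : IsOfFinOrder η) :
    ∃ ρ : H →* ℂˣ,
      (QuotientGroup.mk ρ : (H →* ℂˣ) ⧸ charsVanishing ξ) = QuotientGroup.mk η ∧
      IsOfFinOrder ρ ∧
      orderOf (QuotientGroup.mk η : (H →* ℂˣ) ⧸ charsVanishing ξ) ∣ orderOf ρ ∧
      orderOf ρ ∣ orderOf (QuotientGroup.mk η : (H →* ℂˣ) ⧸ charsVanishing ξ) *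
        Monoid.exponent (↥(primitiveClosure ξ) ⧸ ξ.subgroupOf (primitiveClosure ξ)) := by
  have := charsVanishing_normal ξ
  set n := orderOf (QuotientGroup.mk η : (H →* ℂˣ) ⧸ charsVanishing ξ)
  set c := Monoid.exponent (↥(primitiveClosure ξ) ⧸ ξ.subgroupOf (primitiveClosure ξ))
  have hηn : η ^ n ∈ charsVanishing ξ := by
    rw [← QuotientGroup.eq_one_iff, QuotientGroup.mk_pow, pow_orderOf_eq_one]
  -- `Monoid.exponent` is `0` when `ξ̄/ξ` has no finite exponent.
  obtain hc | hc := eq_or_ne c 0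
  · exact ⟨η, rfl, hη, orderOf_map_dvd (QuotientGroup.mk' _) η, by simp [hc]⟩
  have hn : n ≠ 0 := ((QuotientGroup.mk' _).isOfFinOrder hη).orderOf_pos.ne'
  obtain ⟨σ, hσ, hσnc⟩ := exists_pow_eq_of_mem_charsVanishing_primitiveClosure
    (mul_ne_zero hn hc) (pow_mul η n c ▸ pow_exponent_mem_charsVanishing_primitiveClosure hηn)
  obtain ⟨ρ, hρ, hρnc⟩ := QuotientGroup.exists_mk_eq_and_pow_eq_one
    (charsVanishing_primitiveClosure_le hσ) hσnc
  have hnρ := orderOf_map_dvd (QuotientGroup.mk' (charsVanishing ξ)) ρ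
  rw [QuotientGroup.mk'_apply, hρ] at hnρ
  exact ⟨ρ, hρ, isOfFinOrder_iff_pow_eq_one.2 ⟨n * c, by positivity, hρnc⟩, hnρ,
    orderOf_dvd_of_pow_eq_one hρnc⟩

/-- If `η` is a finite-order character, then its coset modulo `V(ξ)` contains a
finite-order representative `ρ` whose order `m` satisfies `n ∣ m` and
`m ∣ n·c`, where `n` is the order of the coset and `c` the exponent of the
determinant group `ξ̄/ξ`. -/
theorem finite_order_coset_representative {H : Type*} [CommGroup H]
    (hfg : Group.FG H) (ξ : Subgroup H) (η : H →* ℂˣ) (hη : IsOfFinOrder η) :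
    ∃ ρ : H →* ℂˣ,
      (QuotientGroup.mk ρ : (H →* ℂˣ) ⧸ charsVanishing ξ) = QuotientGroup.mk η ∧
      IsOfFinOrder ρ ∧
      orderOf (QuotientGroup.mk η : (H →* ℂˣ) ⧸ charsVanishing ξ) ∣ orderOf ρ ∧
      orderOf ρ ∣ orderOf (QuotientGroup.mk η : (H →* ℂˣ) ⧸ charsVanishing ξ) *
        Monoid.exponent (↥(primitiveClosure ξ) ⧸ ξ.subgroupOf (primitiveClosure ξ)) :=
  finite_order_coset_representative_general ξ η hη
end

section
/- Let χ₁, χ₂ be primitive sublattices of ℤ^r with χ₁ ∩ χ₂ = 0 and χ₁ ⊕ χ₂ of full rank r. Then the intersection exp(χ₁ ⊗ ℂ) ∩ exp(χ₂ ⊗ ℂ) in (ℂ*)^r is a finite group isomorphic to (χ₁+χ₂)‾/(χ₁+χ₂), the quotient of the primitive closure of χ₁+χ₂ in ℤ^r by χ₁+χ₂. -/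
/-- A sublattice `χ ≤ L` is primitive if `L/χ` is torsion-free, i.e. `χ` is
saturated. -/
def IsPrimitiveLattice {H : Type*} [AddCommGroup H] (χ : AddSubgroup H) : Prop :=
  ∀ (x : H) (n : ℕ), 0 < n → n • x ∈ χ → x ∈ χ

/-- The coordinate-wise exponential map `ℂ^r → (ℂ*)^r`. -/
noncomputable def expMap {r : ℕ} (z : Fin r → ℂ) : Fin r → ℂˣ :=
  fun i => Units.mk0 (Complex.exp (2 * Real.pi * Complex.I * z i)) (Complex.exp_ne_zero _)

/-- The complex span `χ ⊗ ℂ ⊆ ℂ^r` of a sublattice `χ ≤ ℤ^r`. -/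
def complexSpan {r : ℕ} (χ : AddSubgroup (Fin r → ℤ)) : Set (Fin r → ℂ) :=
  ↑(Submodule.span ℂ ((fun (v : Fin r → ℤ) (i : Fin r) => (v i : ℂ)) '' (χ : Set (Fin r → ℤ))))

/-!
Write `Vᵢ = χᵢ ⊗ ℂ`. Counting ranks, `ℂ^r = V₁ ⊕ V₂`; let `p` be the projection onto `V₁` along
`V₂`. If `exp z₁ = exp z₂` with `zᵢ ∈ Vᵢ`, then `v = z₁ - z₂ ∈ ℤ^r` and `z₁ = p v`, so
`v ↦ exp (p v)` maps `ℤ^r` onto `exp V₁ ∩ exp V₂`. Its kernel is `χ₁ + χ₂`: if `p v` is integral,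
primitivity gives `p v ∈ V₁ ∩ ℤ^r = χ₁` and `v - p v ∈ V₂ ∩ ℤ^r = χ₂`. Since `χ₁ + χ₂` has full
rank, its primitive closure is all of `ℤ^r`, and the quotient by it is finite.
-/

open Module AddSubgroup

universe u v

theorem Submodule.finrank_sup_add_finrank_inf_eq_of_isNoetherian {R : Type u} {M : Type v} [Ring R]
    [StrongRankCondition R] [HasRankNullity.{v} R] [AddCommGroup M] [Module R M]
    [IsNoetherian R M] (s t : Submodule R M) :
    finrank R ↥(s ⊔ t) + finrank R ↥(s ⊓ t) = finrank R s + finrank R t := by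
  have h := Submodule.rank_sup_add_rank_inf_eq s t
  rw [← finrank_eq_rank R ↥(s ⊔ t), ← finrank_eq_rank R ↥(s ⊓ t), ← finrank_eq_rank R ↥s,
    ← finrank_eq_rank R ↥t] at h
  exact_mod_cast h

section Lattice

variable {M : Type*} [AddCommGroup M]

theorem finite_addPrimitiveClosure_quotient [Module.Finite ℤ M] (ξ : AddSubgroup M) :
    Finite (addPrimitiveClosure ξ ⧸ ξ.addSubgroupOf (addPrimitiveClosure ξ)) := by
  have : AddGroup.FG (addPrimitiveClosure ξ) := Module.Finite.iff_addGroup_fg.mp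
    (inferInstanceAs (Module.Finite ℤ (toIntSubmodule (addPrimitiveClosure ξ))))
  refine AddCommGroup.finite_of_fg_isAddTorsion _ ?_
  rintro ⟨⟨x, n, hn, hx⟩⟩
  exact isOfFinAddOrder_iff_nsmul_eq_zero.mpr ⟨n, hn, (QuotientAddGroup.eq_zero_iff _).mpr hx⟩

theorem addPrimitiveClosure_eq_top_of_finrank_eq [Module.Finite ℤ M] (ξ : AddSubgroup M)
    (h : finrank ℤ (toIntSubmodule ξ) = finrank ℤ M) : addPrimitiveClosure ξ = ⊤ := by
  have hquot : finrank ℤ (M ⧸ toIntSubmodule ξ) = 0 := by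
    have := Module.finrank_quotient_add_finrank_le (toIntSubmodule ξ)
    omega
  refine eq_top_iff.mpr fun x _ => ?_
  obtain ⟨a, ha, hax⟩ := Module.finrank_eq_zero_iff.mp hquot (Submodule.Quotient.mk x)
  rw [← natAbs_nsmul_eq_zero, ← Submodule.Quotient.mk_smul, Submodule.Quotient.mk_eq_zero] at hax
  exact ⟨a.natAbs, Int.natAbs_pos.mpr ha, hax⟩

theorem exists_surjective_ker_eq_of_eq_top {ξ K : AddSubgroup M} (hK : K = ⊤) :
    ∃ φ : M →+ K ⧸ ξ.addSubgroupOf K, Function.Surjective φ ∧ φ.ker = ξ := by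
  subst hK
  refine ⟨(QuotientAddGroup.mk' _).comp topEquiv.symm.toAddMonoidHom, fun q => ?_, ?_⟩
  · obtain ⟨x, rfl⟩ := QuotientAddGroup.mk_surjective q
    exact ⟨x, rfl⟩
  ext v
  simp [mem_addSubgroupOf]

end Lattice

noncomputable def MonoidHom.rangeEquivOfKerEq {G H K : Type*} [Group G] [Group H] [Group K]
    (f : G →* H) (g : G →* K) (hg : Function.Surjective g) (h : f.ker = g.ker) :
    f.range ≃* K :=
  (QuotientGroup.quotientKerEquivRange f).symm.trans
    ((QuotientGroup.quotientMulEquivOfEq h).trans (QuotientGroup.quotientKerEquivOfSurjective g hg))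

section ComplexSubspace

variable {r : ℕ}

def intVecCast (r : ℕ) : (Fin r → ℤ) →ₗ[ℤ] (Fin r → ℂ) :=
  ((Int.castAddHom ℂ).compLeft (Fin r)).toIntLinearMap

@[simp]
theorem intVecCast_apply (v : Fin r → ℤ) (i : Fin r) : intVecCast r v i = v i := rfl

theorem intVecCast_injective : Function.Injective (intVecCast r) :=
  fun _ _ h => funext fun i => by simpa using congrFun h i

def complexSubspace (χ : AddSubgroup (Fin r → ℤ)) : Submodule ℂ (Fin r → ℂ) :=
  Submodule.span ℂ (intVecCast r '' χ)

theorem coe_complexSubspace (χ : AddSubgroup (Fin r → ℤ)) :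
    (complexSubspace χ : Set (Fin r → ℂ)) = complexSpan χ := rfl

theorem intVecCast_mem_complexSubspace {χ : AddSubgroup (Fin r → ℤ)} {v : Fin r → ℤ}
    (hv : v ∈ χ) : intVecCast r v ∈ complexSubspace χ :=
  Submodule.subset_span ⟨v, hv, rfl⟩

theorem finrank_complexSubspace_le (χ : AddSubgroup (Fin r → ℤ)) :
    finrank ℂ (complexSubspace χ) ≤ finrank ℤ (toIntSubmodule χ) := by
  let b := Module.Free.chooseBasis ℤ (toIntSubmodule χ)
  have hχ : (χ : Set (Fin r → ℤ)) = Submodule.span ℤ (Set.range fun i => (b i : Fin r → ℤ)) := by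
    rw [Set.range_comp', ← (toIntSubmodule χ).coe_subtype, ← Submodule.map_span, b.span_eq,
      Submodule.map_subtype_top, coe_toIntSubmodule]
  have hspan : complexSubspace χ = Submodule.span ℂ (Set.range fun i => intVecCast r (b i)) := by
    rw [complexSubspace, hχ, ← Submodule.map_coe, Submodule.map_span,
      Submodule.span_span_of_tower, ← Set.range_comp]
    rfl
  rw [hspan, Module.finrank_eq_card_chooseBasisIndex ℤ (toIntSubmodule χ)]
  exact finrank_range_le_card _

theorem intVecCast_mem_complexSubspace_of_mem_addPrimitiveClosure {χ : AddSubgroup (Fin r → ℤ)}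
    {v : Fin r → ℤ} (hv : v ∈ addPrimitiveClosure χ) : intVecCast r v ∈ complexSubspace χ := by
  obtain ⟨n, hn, hnv⟩ := hv
  have h := (complexSubspace χ).smul_mem (n : ℂ)⁻¹ (intVecCast_mem_complexSubspace hnv)
  rwa [map_nsmul, ← Nat.cast_smul_eq_nsmul ℂ, smul_smul,
    inv_mul_cancel₀ (Nat.cast_ne_zero.mpr hn.ne'), one_smul] at h

theorem complexSubspace_eq_top {χ : AddSubgroup (Fin r → ℤ)} (h : addPrimitiveClosure χ = ⊤) :
    complexSubspace χ = ⊤ := by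
  rw [eq_top_iff, ← (Pi.basisFun ℂ (Fin r)).span_eq, Submodule.span_le]
  rintro - ⟨j, rfl⟩
  have hj : Pi.basisFun ℂ (Fin r) j = intVecCast r (Pi.single j 1) := by
    ext i; by_cases hij : i = j <;> simp [hij]
  rw [hj]
  exact intVecCast_mem_complexSubspace_of_mem_addPrimitiveClosure (h ▸ mem_top _)

theorem complexSubspace_sup (χ₁ χ₂ : AddSubgroup (Fin r → ℤ)) :
    complexSubspace (χ₁ ⊔ χ₂) = complexSubspace χ₁ ⊔ complexSubspace χ₂ := by
  refine le_antisymm (Submodule.span_le.mpr ?_)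
    (sup_le (Submodule.span_mono (Set.image_mono (SetLike.coe_mono le_sup_left)))
      (Submodule.span_mono (Set.image_mono (SetLike.coe_mono le_sup_right))))
  rintro - ⟨v, hv, rfl⟩
  obtain ⟨y, hy, z, hz, rfl⟩ := mem_sup.mp hv
  rw [map_add]
  exact Submodule.add_mem_sup (intVecCast_mem_complexSubspace hy)
    (intVecCast_mem_complexSubspace hz)

variable {χ₁ χ₂ : AddSubgroup (Fin r → ℤ)}

theorem isCompl_complexSubspace (hdisj : χ₁ ⊓ χ₂ = ⊥)
    (hrank : finrank ℤ (toIntSubmodule (χ₁ ⊔ χ₂)) = r)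
    (hcl : addPrimitiveClosure (χ₁ ⊔ χ₂) = ⊤) :
    IsCompl (complexSubspace χ₁) (complexSubspace χ₂) := by
  have hsup : complexSubspace χ₁ ⊔ complexSubspace χ₂ = ⊤ := by
    rw [← complexSubspace_sup, complexSubspace_eq_top hcl]
  have hrank_add : finrank ℤ (toIntSubmodule χ₁) + finrank ℤ (toIntSubmodule χ₂) = r := by
    have := Submodule.finrank_sup_add_finrank_inf_eq_of_isNoetherian
      (toIntSubmodule χ₁) (toIntSubmodule χ₂)
    rwa [← OrderIso.map_sup, ← OrderIso.map_inf, hdisj, OrderIso.map_bot, finrank_bot, add_zero,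
      hrank, eq_comm] at this
  have hdim := Submodule.finrank_sup_add_finrank_inf_eq (complexSubspace χ₁) (complexSubspace χ₂)
  rw [hsup, finrank_top, Module.finrank_fin_fun] at hdim
  have := finrank_complexSubspace_le χ₁
  have := finrank_complexSubspace_le χ₂
  exact ⟨disjoint_iff.mpr (Submodule.finrank_eq_zero.mp (by omega)), codisjoint_iff.mpr hsup⟩

theorem mem_of_intVecCast_mem_complexSubspace (h₁ : IsPrimitiveLattice χ₁)
    (hcl : addPrimitiveClosure (χ₁ ⊔ χ₂) = ⊤)
    (hdisj : Disjoint (complexSubspace χ₁) (complexSubspace χ₂)) {w : Fin r → ℤ}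
    (hw : intVecCast r w ∈ complexSubspace χ₁) : w ∈ χ₁ := by
  obtain ⟨n, hn, hnw⟩ := hcl ▸ mem_top w
  obtain ⟨y, hy, z, hz, hyz⟩ := mem_sup.mp hnw
  have hz₁ : intVecCast r z ∈ complexSubspace χ₁ := by
    rw [eq_sub_of_add_eq' hyz, map_sub, map_nsmul]
    exact sub_mem (nsmul_mem hw n) (intVecCast_mem_complexSubspace hy)
  have hz0 : z = 0 := intVecCast_injective <| by
    simpa using Submodule.disjoint_def.mp hdisj _ hz₁ (intVecCast_mem_complexSubspace hz)
  rw [hz0, add_zero] at hyz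
  exact h₁ w n hn (hyz ▸ hy)

end ComplexSubspace

section Exp

variable {r : ℕ}

theorem expMap_add (z w : Fin r → ℂ) : expMap (z + w) = expMap z * expMap w := by
  ext i
  simp [expMap, mul_add, Complex.exp_add]

theorem expMap_eq_one_iff {z : Fin r → ℂ} : expMap z = 1 ↔ ∃ v, intVecCast r v = z := by
  have h2πi : 2 * (Real.pi : ℂ) * Complex.I ≠ 0 := by simp [Real.pi_ne_zero]
  simp only [funext_iff, Units.ext_iff, expMap, Units.val_mk0, Pi.one_apply, Units.val_one,
    Complex.exp_eq_one_iff, intVecCast_apply]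
  refine ⟨fun h => ?_, fun ⟨v, hv⟩ i => ⟨v i, by rw [← hv]; ring⟩⟩
  choose v hv using h
  exact ⟨v, fun i => mul_left_cancel₀ h2πi (by rw [hv i]; ring)⟩

theorem expMap_eq_expMap_iff {z w : Fin r → ℂ} :
    expMap z = expMap w ↔ ∃ v, intVecCast r v = z - w := by
  rw [← expMap_eq_one_iff, ← mul_eq_right (b := expMap w), ← expMap_add, sub_add_cancel]

variable {χ₁ χ₂ : AddSubgroup (Fin r → ℤ)} (hc : IsCompl (complexSubspace χ₁) (complexSubspace χ₂))

noncomputable def expProjection : Multiplicative (Fin r → ℤ) →* (Fin r → ℂˣ) :=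
  MonoidHom.mk'
    (fun v => expMap ((complexSubspace χ₁).projection _ hc (intVecCast r v.toAdd)))
    fun a b => by simp only [toAdd_mul, map_add, expMap_add]

theorem coe_range_expProjection :
    ((expProjection hc).range : Set (Fin r → ℂˣ)) =
      expMap '' complexSpan χ₁ ∩ expMap '' complexSpan χ₂ := by
  ext x
  simp only [← coe_complexSubspace, SetLike.mem_coe, MonoidHom.mem_range, Set.mem_inter_iff,
    Set.mem_image, expProjection, MonoidHom.mk'_apply]
  constructor
  · rintro ⟨v, rfl⟩
    set p := (complexSubspace χ₁).projection _ hc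
    refine ⟨⟨_, Submodule.projection_apply_mem hc _, rfl⟩,
      ⟨p (intVecCast r v.toAdd) - intVecCast r v.toAdd, ?_, ?_⟩⟩
    · rw [← neg_sub, ← Submodule.projection_eq_self_sub_projection hc]
      exact neg_mem (Submodule.projection_apply_mem _ _)
    · exact expMap_eq_expMap_iff.mpr ⟨-v.toAdd, by simp⟩
  · rintro ⟨⟨z₁, hz₁, rfl⟩, z₂, hz₂, hz⟩
    obtain ⟨w, hw⟩ := expMap_eq_expMap_iff.mp hz.symm
    refine ⟨Multiplicative.ofAdd w, ?_⟩
    rw [toAdd_ofAdd, hw, map_sub, Submodule.projection_apply_of_mem_left hc hz₁,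
      Submodule.projection_apply_of_mem_right hc hz₂, sub_zero]

theorem expProjection_eq_one_iff (h₁ : IsPrimitiveLattice χ₁) (h₂ : IsPrimitiveLattice χ₂)
    (hcl : addPrimitiveClosure (χ₁ ⊔ χ₂) = ⊤) (v : Multiplicative (Fin r → ℤ)) :
    expProjection hc v = 1 ↔ v.toAdd ∈ χ₁ ⊔ χ₂ := by
  simp only [expProjection, MonoidHom.mk'_apply, expMap_eq_one_iff]
  constructor
  · rintro ⟨w, hw⟩
    have hw₁ : w ∈ χ₁ := mem_of_intVecCast_mem_complexSubspace h₁ hcl hc.disjoint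
      (hw ▸ Submodule.projection_apply_mem hc _)
    have hw₂ : v.toAdd - w ∈ χ₂ := by
      refine mem_of_intVecCast_mem_complexSubspace h₂ (sup_comm χ₁ χ₂ ▸ hcl) hc.disjoint.symm ?_
      rw [map_sub, hw, ← Submodule.projection_eq_self_sub_projection hc]
      exact Submodule.projection_apply_mem _ _
    exact mem_sup.mpr ⟨w, hw₁, _, hw₂, add_sub_cancel w _⟩
  · intro hv
    obtain ⟨y, hy, z, hz, hyz⟩ := mem_sup.mp hv
    refine ⟨y, ?_⟩
    rw [← hyz, map_add, map_add,
      Submodule.projection_apply_of_mem_left hc (intVecCast_mem_complexSubspace hy),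
      Submodule.projection_apply_of_mem_right hc (intVecCast_mem_complexSubspace hz), add_zero]

end Exp

/-- For primitive sublattices `χ₁, χ₂ ≤ ℤ^r` with `χ₁ ∩ χ₂ = 0` and `χ₁ ⊕ χ₂`
of full rank, `exp(χ₁ ⊗ ℂ) ∩ exp(χ₂ ⊗ ℂ)` is a finite group isomorphic to the
determinant group `(χ₁+χ₂)‾/(χ₁+χ₂)`. -/
theorem exp_inter_iso_determinant_group {r : ℕ} (χ₁ χ₂ : AddSubgroup (Fin r → ℤ))
    (h₁ : IsPrimitiveLattice χ₁) (h₂ : IsPrimitiveLattice χ₂)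
    (hdisj : χ₁ ⊓ χ₂ = ⊥)
    (hrank : Module.finrank ℤ ↥(AddSubgroup.toIntSubmodule (χ₁ ⊔ χ₂)) = r) :
    ∃ S : Subgroup (Fin r → ℂˣ),
      (S : Set (Fin r → ℂˣ)) = expMap '' complexSpan χ₁ ∩ expMap '' complexSpan χ₂ ∧
      Finite ↥S ∧
      Nonempty (↥S ≃* Multiplicative
        (↥(addPrimitiveClosure (χ₁ ⊔ χ₂)) ⧸
          (χ₁ ⊔ χ₂).addSubgroupOf (addPrimitiveClosure (χ₁ ⊔ χ₂)))) := by
  have hcl : addPrimitiveClosure (χ₁ ⊔ χ₂) = ⊤ :=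
    addPrimitiveClosure_eq_top_of_finrank_eq _ (by rw [hrank, Module.finrank_fin_fun])
  have hc := isCompl_complexSubspace hdisj hrank hcl
  obtain ⟨φ, hφ, hφker⟩ := exists_surjective_ker_eq_of_eq_top (ξ := χ₁ ⊔ χ₂) hcl
  have hker : (expProjection hc).ker = (AddMonoidHom.toMultiplicative φ).ker := by
    ext v
    rw [MonoidHom.mem_ker, MonoidHom.mem_ker, expProjection_eq_one_iff hc h₁ h₂ hcl,
      AddMonoidHom.toMultiplicative_apply_apply, ofAdd_eq_one, ← AddMonoidHom.mem_ker, hφker]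
  let e := (expProjection hc).rangeEquivOfKerEq _ hφ hker
  have := finite_addPrimitiveClosure_quotient (χ₁ ⊔ χ₂)
  exact ⟨_, coe_range_expProjection hc, Finite.of_equiv _ e.symm.toEquiv, ⟨e⟩⟩
end

section
/- For every n ≥ 0 and every finite abelian group A, there exist an integer r and subtori T₁, T₂ of (ℂ*)^r such that T₁ ∩ T₂ is isomorphic, as a complex algebraic group, to (ℂ*)^n × A. -/
/-!
For `D ∈ ℕ^m` the lattice `{(v, D v)} ≤ ℤ^m × ℤ^m` is primitive, and its subtorus is the graph
`{(w, w^D)}` of the coordinate-wise power map. The graphs for `0` and for `D` meet in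
`{(w, 1) | w^D = 1} ≅ ∏ⱼ μ_{D j}`, where `μ₀ = ℂˣ`. Writing `A ≅ ∏ⱼ ℤ/N j` and taking
`D = (0, …, 0, N 1, …, N k)` gives `(ℂˣ)^n × ∏ⱼ μ_{N j} ≅ (ℂˣ)^n × A`; the torsion factor is finite,
hence discrete, so this isomorphism is also a homeomorphism.
-/

open Fin

section GraphLattice

variable {m : ℕ}

def graphLattice (D : Fin m → ℕ) : AddSubgroup (Fin (m + m) → ℤ) where
  carrier := {v | ∀ j, v (natAdd m j) = D j * v (castAdd m j)}
  add_mem' hv hw j := by simp only [Pi.add_apply, hv j, hw j]; ring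
  zero_mem' j := by simp
  neg_mem' hv j := by simp only [Pi.neg_apply, hv j]; ring

theorem mem_graphLattice {D : Fin m → ℕ} {v : Fin (m + m) → ℤ} :
    v ∈ graphLattice D ↔ ∀ j, v (natAdd m j) = D j * v (castAdd m j) := Iff.rfl

theorem isPrimitiveLattice_graphLattice (D : Fin m → ℕ) : IsPrimitiveLattice (graphLattice D) := by
  intro v c hc hcv j
  have h := mem_graphLattice.1 hcv j
  simp only [Pi.smul_apply, nsmul_eq_mul] at h
  apply mul_left_cancel₀ (Int.natCast_ne_zero.2 hc.ne')
  linear_combination h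

theorem single_append_single_mem_graphLattice (D : Fin m → ℕ) (j : Fin m) :
    append (Pi.single j 1) (Pi.single j (D j : ℤ)) ∈ graphLattice D := by
  intro i
  simp only [append_left, append_right]
  by_cases h : i = j
  · subst h; simp
  · simp [h]

theorem complexSpan_graphLattice (D : Fin m → ℕ) :
    complexSpan (graphLattice D) = {z | ∀ j, z (natAdd m j) = (D j : ℂ) * z (castAdd m j)} := by
  apply Set.Subset.antisymm
  · intro z hz
    induction hz using Submodule.span_induction with
    | mem x hx =>
      obtain ⟨v, hv, rfl⟩ := hx
      intro j
      simp only
      exact_mod_cast hv j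
    | zero => simp
    | add x y _ _ hx hy => intro j; simp only [Pi.add_apply, hx j, hy j]; ring
    | smul c x _ hx => intro j; simp only [Pi.smul_apply, smul_eq_mul, hx j]; ring
  · intro z hz
    have hsum : z = ∑ j, z (castAdd m j) •
        fun i => ((append (Pi.single j 1) (Pi.single j (D j : ℤ)) i : ℤ) : ℂ) := by
      ext i
      induction i using Fin.addCases with
      | left i => simp [append_left, Pi.single_apply]
      | right i =>
        rw [hz i]
        simp only [Finset.sum_apply, Pi.smul_apply, smul_eq_mul, append_right, Pi.single_apply]
        simp [mul_comm]
    rw [hsum]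
    exact Submodule.sum_mem _ fun j _ => Submodule.smul_mem _ _
      (Submodule.subset_span ⟨_, single_append_single_mem_graphLattice D j, rfl⟩)

end GraphLattice

section ExpMap

variable {r : ℕ}

theorem expMap_surjective : Function.Surjective (expMap (r := r)) := by
  intro w
  refine ⟨fun i => Complex.log (w i) / (2 * Real.pi * Complex.I), funext fun i => Units.ext ?_⟩
  simp [expMap, mul_div_cancel₀ _ Complex.two_pi_I_ne_zero, Complex.exp_log]

theorem expMap_apply_eq_pow {z : Fin r → ℂ} {a b : Fin r} {d : ℕ} (h : z a = d * z b) :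
    expMap z a = expMap z b ^ d := by
  ext
  simp only [expMap, Units.val_mk0, Units.val_pow_eq_pow_val, h, ← Complex.exp_nat_mul]
  ring_nf

theorem expMap_image_complexSpan_graphLattice {m : ℕ} (D : Fin m → ℕ) :
    expMap '' complexSpan (graphLattice D) =
      {w | ∀ j, w (natAdd m j) = w (castAdd m j) ^ D j} := by
  rw [complexSpan_graphLattice]
  apply Set.Subset.antisymm
  · rintro _ ⟨z, hz, rfl⟩ j
    exact expMap_apply_eq_pow (hz j)
  · intro w hw
    obtain ⟨z, rfl⟩ := expMap_surjective w
    let z' := append (fun j => z (castAdd m j)) fun j => D j * z (castAdd m j)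
    have hz' : ∀ j, z' (natAdd m j) = D j * z' (castAdd m j) := by
      simp only [z', append_left, append_right, implies_true]
    have hcast : ∀ j, expMap z' (castAdd m j) = expMap z (castAdd m j) := by
      intro j; ext; simp [z', expMap, append_left]
    refine ⟨z', hz', funext fun i => ?_⟩
    induction i using Fin.addCases with
    | left j => exact hcast j
    | right j => rw [expMap_apply_eq_pow (hz' j), hw j, hcast]

end ExpMap

section GraphInter

variable {m : ℕ}

def graphInter (D : Fin m → ℕ) : Subgroup (Fin (m + m) → ℂˣ) :=
  Subgroup.pi Set.univ (append (fun j => rootsOfUnity (D j) ℂ) fun _ => ⊥)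

theorem mem_graphInter {D : Fin m → ℕ} {w : Fin (m + m) → ℂˣ} :
    w ∈ graphInter D ↔
      (∀ j, w (castAdd m j) ∈ rootsOfUnity (D j) ℂ) ∧ ∀ j, w (natAdd m j) = 1 := by
  simp only [graphInter, Subgroup.mem_pi, Set.mem_univ, true_implies, forall_fin_add,
    append_left, append_right, Subgroup.mem_bot]

theorem coe_graphInter (D : Fin m → ℕ) :
    (graphInter D : Set (Fin (m + m) → ℂˣ)) =
      expMap '' complexSpan (graphLattice 0) ∩ expMap '' complexSpan (graphLattice D) := by
  ext w
  simp only [SetLike.mem_coe, mem_graphInter, expMap_image_complexSpan_graphLattice,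
    Set.mem_inter_iff, Set.mem_ofPred_eq, Pi.zero_apply, pow_zero, mem_rootsOfUnity]
  constructor
  · rintro ⟨hroot, hone⟩
    exact ⟨hone, fun j => (hone j).trans (hroot j).symm⟩
  · rintro ⟨hone, hpow⟩
    exact ⟨fun j => (hpow j).symm.trans (hone j), hone⟩

end GraphInter

def graphInterAppendEquiv (n : ℕ) {k : ℕ} (N : Fin k → ℕ) :
    graphInter (append (0 : Fin n → ℕ) N) ≃ₜ* (Fin n → ℂˣ) × ∀ j, rootsOfUnity (N j) ℂ where
  toFun w := (fun i => w.1 (castAdd _ (castAdd k i)),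
    fun j => ⟨w.1 (castAdd _ (natAdd n j)), by
      simpa only [append_right] using (mem_graphInter.1 w.2).1 (natAdd n j)⟩)
  invFun p := ⟨append (append p.1 fun j => (p.2 j : ℂˣ)) 1, by
    refine mem_graphInter.2 ⟨fun j => ?_, fun j => by simp only [append_right, Pi.one_apply]⟩
    induction j using Fin.addCases with
    | left i => simp [append_left, rootsOfUnity_zero]
    | right j => simpa only [append_left, append_right] using (p.2 j).2⟩
  left_inv w := by
    ext i : 2
    induction i using Fin.addCases with
    | left j => induction j using Fin.addCases <;> simp only [append_left, append_right]
    | right j => simp only [append_right, Pi.one_apply, (mem_graphInter.1 w.2).2 j]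
  right_inv p := by ext <;> simp only [append_left, append_right]
  map_mul' _ _ := rfl
  continuous_toFun :=
    have hcoord (i) : Continuous fun w : graphInter (append (0 : Fin n → ℕ) N) => w.1 i :=
      (continuous_apply i).comp continuous_subtype_val
    (continuous_pi fun _ => hcoord _).prodMk (continuous_pi fun _ => (hcoord _).subtype_mk _)
  continuous_invFun := by fun_prop

noncomputable def Complex.rootsOfUnityMulEquivZMod (N : ℕ) [NeZero N] :
    rootsOfUnity N ℂ ≃* Multiplicative (ZMod N) :=
  mulEquivOfCyclicCardEq (by rw [Complex.card_rootsOfUnity, Nat.card_eq_fintype_card,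
    Fintype.card_multiplicative, ZMod.card])

theorem exists_pi_rootsOfUnity_mulEquiv (A : Type*) [AddCommGroup A] [Finite A] :
    ∃ (k : ℕ) (N : Fin k → ℕ), Nonempty ((∀ j, rootsOfUnity (N j) ℂ) ≃* Multiplicative A) := by
  obtain ⟨ι, _, n, hn, ⟨f⟩⟩ := AddCommGroup.equiv_directSum_zmod_of_finite' A
  let e := (Fintype.equivFin ι).symm
  have (j : Fin (Fintype.card ι)) : NeZero (n (e j)) := ⟨by have := hn (e j); omega⟩
  let g : (∀ j, ZMod (n (e j))) ≃+ A :=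
    (RingEquiv.piCongrLeft (fun i => ZMod (n i)) e).toAddEquiv
      |>.trans (DirectSum.addEquivProd _).symm |>.trans f.symm
  exact ⟨_, fun j => n (e j),
    ⟨(MulEquiv.piCongrRight fun _ => Complex.rootsOfUnityMulEquivZMod _).trans <|
      (MulEquiv.piMultiplicative _).symm.trans g.toMultiplicative⟩⟩

/-- For every `n ≥ 0` and every finite abelian group `A` there are subtori
`T₁, T₂` of some `(ℂ*)^r` whose intersection is isomorphic (as a topological
group, i.e. as a complex algebraic group of this kind) to `(ℂ*)^n × A`. -/
theorem exists_subtori_inter_iso (n : ℕ) (A : Type) [AddCommGroup A] [Finite A] :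
    ∃ (r : ℕ) (χ₁ χ₂ : AddSubgroup (Fin r → ℤ)),
      IsPrimitiveLattice χ₁ ∧ IsPrimitiveLattice χ₂ ∧
      ∃ S : Subgroup (Fin r → ℂˣ),
        (S : Set (Fin r → ℂˣ)) = expMap '' complexSpan χ₁ ∩ expMap '' complexSpan χ₂ ∧
        ∃ e : ↥S ≃* ((Fin n → ℂˣ) × Multiplicative A),
          letI : TopologicalSpace (Multiplicative A) := ⊥
          Continuous e ∧ Continuous e.symm := by
  obtain ⟨k, N, ⟨φ⟩⟩ := exists_pi_rootsOfUnity_mulEquiv A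
  let D : Fin (n + k) → ℕ := append 0 N
  refine ⟨_, graphLattice 0, graphLattice D, isPrimitiveLattice_graphLattice _,
    isPrimitiveLattice_graphLattice _, graphInter D, coe_graphInter D, ?_⟩
  let _ : TopologicalSpace (Multiplicative A) := ⊥
  have : DiscreteTopology (Multiplicative A) := ⟨rfl⟩
  have : Finite (∀ j, rootsOfUnity (N j) ℂ) := Finite.of_equiv _ φ.symm.toEquiv
  let E := graphInterAppendEquiv n N
  refine ⟨E.toMulEquiv.trans (.prodCongr (.refl _) φ), ?_, ?_⟩
  · exact (continuous_id.prodMap continuous_of_discreteTopology).comp E.continuous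
  · exact E.symm.continuous.comp (continuous_id.prodMap continuous_of_discreteTopology)
end
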